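/- Pushing a non-lambda symbol preserves l-safety: if s is an l-safe higher-order stack and a is a symbol not in the designated set of lambda symbols, then push₁ a^(j,k) s is l-safe for any link (j,k). -/

import Mathlib

/-- An annotated symbol: a stack symbol together with its link `(j, h)`
(link order `j`, link height `h`). -/
abbrev Ann (Γ : Type) := Γ × ℕ × ℕ

/-- Higher-order stacks with links: an order-0 stack is an annotated symbol, and an
order-(m+1) stack is a (finite) sequence of order-m stacks, the top at the end.
An order-1 stack is thus a sequence of annotated symbols. -/
def Stk (Γ : Type) : ℕ → Type
  | 0 => Ann Γ
  | m + 1 => List (Stk Γ m)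

variable {Γ : Type}

/-- Apply `f` to the last (top) element of a list, if any. -/
def modLast {α : Type} (f : α → α) : List α → List α
  | [] => []
  | [a] => [f a]
  | a :: b :: r => a :: modLast f (b :: r)

/-- The top order-1 stack of a higher-order stack. -/
def top1 : ∀ {m : ℕ}, Stk Γ (m + 1) → Stk Γ 1
  | 0, s => s
  | m + 1, s => top1 (List.getLastD s ([] : Stk Γ (m + 1)))

/-- `pref1 i s`: the prefix of `s` at the `i`-th symbol (0-based) of its top order-1
stack, i.e. `s` with everything above that occurrence removed. -/
def pref1 : ∀ {m : ℕ}, ℕ → Stk Γ (m + 1) → Stk Γ (m + 1)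
  | 0, i, s => List.take (i + 1) s
  | _ + 1, i, s => modLast (pref1 i) s

/-- `popj j s`: the operation `pop_j`, removing the top order-(j-1) stack
(for `1 ≤ j ≤` order of `s`; identity-like otherwise). -/
def popj : ∀ {m : ℕ}, ℕ → Stk Γ (m + 1) → Stk Γ (m + 1)
  | 0, _, s => List.dropLast s
  | m + 1, j, s => if j = m + 2 then List.dropLast s else modLast (popj j) s

/-- `collapse s = pop_j^h s` where `(j, h)` is the link of the top symbol of `s`. -/
def collapse {m : ℕ} (s : Stk Γ (m + 1)) : Stk Γ (m + 1) :=
  match List.getLast? (top1 s) with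
  | some (_, j, h) => (popj j)^[h] s
  | none => s

/-- `push1 x s`: push the annotated symbol `x` onto the top order-1 stack of `s`. -/
def push1 : ∀ {m : ℕ}, Ann Γ → Stk Γ (m + 1) → Stk Γ (m + 1)
  | 0, x, s => List.append s [x]
  | _ + 1, x, s => modLast (push1 x) s

/-- The link-renaming operation `(·)^⟨j⟩`: increment the height of every link of
order `j`, leaving other links unchanged. -/
def renameS (j : ℕ) : ∀ {m : ℕ}, Stk Γ m → Stk Γ m
  | 0, x => if x.2.1 = j then (x.1, j, x.2.2 + 1) else x
  | _ + 1, s => List.map (renameS j) s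

/-- `pushj j s`: the operation `push_j`, duplicating the top order-(j-1) stack and
applying `(·)^⟨j⟩` to the duplicated copy (for `2 ≤ j ≤` order of `s`). -/
def pushj : ∀ {m : ℕ}, ℕ → Stk Γ (m + 1) → Stk Γ (m + 1)
  | 0, _, s => s
  | m + 1, j, s =>
      if j = m + 2 then List.append s (((List.getLast? s).map (renameS j)).toList)
      else modLast (pushj j) s

/-- Helper for the incremental order-decomposition, working on the reversed,
position-annotated top order-1 stack: select the first lambda symbol of order `> l`,
then continue with the threshold raised to its order. -/
def decompRevD (ordf : Γ → ℕ) (isLam : Γ → Bool) :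
    ℕ → List (ℕ × Ann Γ) → List (ℕ × Ann Γ)
  | _, [] => []
  | l, p :: rest =>
      if isLam p.2.1 = true ∧ l < ordf p.2.1 then
        p :: decompRevD ordf isLam (ordf p.2.1) rest
      else decompRevD ordf isLam l rest

/-- The incremental order-decomposition `Decomp_l` of an order-1 stack, with each
selected symbol paired with its position: the last lambda symbol of order `> l`,
preceded by the decomposition of the strict prefix with respect to that order.
The result is listed left-to-right (the symbol of largest order first). -/
def DecompD (ordf : Γ → ℕ) (isLam : Γ → Bool) (l : ℕ) (t : Stk Γ 1) :
    List (ℕ × Ann Γ) :=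
  (decompRevD ordf isLam l ((List.zipIdx (t : List (Ann Γ))).map Prod.swap).reverse).reverse

/-- `l`-safety of a higher-order stack `s` (of order `m+1`), for the CPDA order `n`:
(1) every symbol in `Decomp_l` of the top order-1 stack of `s` has link height 1, and
(2) whenever `n - ord a_q + 1 ≤` order of `s` (so that the link of `a_q` is not
dangling), collapsing the prefix of `s` at `a_q` yields an `l`-safe stack if `a_q` is
the last element of the decomposition, and an `ord a_{q-1}`-safe stack if `a_{q-1}`
is its right neighbour in the decomposition. A stack is safe if it is 0-safe. -/
inductive LSafe (n : ℕ) (ordf : Γ → ℕ) (isLam : Γ → Bool) :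
    ℕ → ∀ {m : ℕ}, Stk Γ (m + 1) → Prop
  | intro (l : ℕ) {m : ℕ} (s : Stk Γ (m + 1))
      (hheights : ∀ p ∈ DecompD ordf isLam l (top1 s), p.2.2.2 = 1)
      (hlast : ∀ p, (DecompD ordf isLam l (top1 s)).getLast? = some p →
          n - ordf p.2.1 + 1 ≤ m + 1 →
          LSafe n ordf isLam l (collapse (pref1 p.1 s)))
      (hadj : ∀ i p p', (DecompD ordf isLam l (top1 s))[i]? = some p →
          (DecompD ordf isLam l (top1 s))[i + 1]? = some p' →
          n - ordf p.2.1 + 1 ≤ m + 1 →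
          LSafe n ordf isLam (ordf p'.2.1) (collapse (pref1 p.1 s))) :
      LSafe n ordf isLam l s

/-!
The order-decomposition never selects a non-lambda symbol, so pushing one leaves `Decomp_l`
of the top order-1 stack unchanged. Pushing also leaves the prefix at every existing position
of that stack unchanged, so each collapse that `l`-safety inspects is the same stack as before.
-/

theorem modLast_append_singleton {α : Type} (f : α → α) (L : List α) (y : α) :
    modLast f (L ++ [y]) = L ++ [f y] := by
  induction L with
  | nil => rfl
  | cons a L ih =>
    cases L with
    | nil => rfl
    | cons b L' => simpa only [List.cons_append, modLast, List.cons.injEq, true_and] using ih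

theorem top1_nil : ∀ {m : ℕ}, top1 ([] : Stk Γ (m + 1)) = ([] : List (Ann Γ))
  | 0 => rfl
  | m + 1 => top1_nil (m := m)

theorem top1_append_singleton {m : ℕ} (L : List (Stk Γ (m + 1))) (g : Stk Γ (m + 1)) :
    top1 (show Stk Γ (m + 2) from L ++ [g]) = top1 g :=
  congrArg top1 List.getLastD_concat

theorem push1_append_singleton {m : ℕ} (x : Ann Γ) (L : List (Stk Γ (m + 1)))
    (g : Stk Γ (m + 1)) :
    push1 x (show Stk Γ (m + 2) from L ++ [g]) = (show Stk Γ (m + 2) from L ++ [push1 x g]) :=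
  modLast_append_singleton (push1 x) L g

theorem pref1_append_singleton {m : ℕ} (i : ℕ) (L : List (Stk Γ (m + 1)))
    (g : Stk Γ (m + 1)) :
    pref1 i (show Stk Γ (m + 2) from L ++ [g]) = (show Stk Γ (m + 2) from L ++ [pref1 i g]) :=
  modLast_append_singleton (pref1 i) L g

/-- The second case arises when some stack on the path to the top order-1 stack is empty. -/
theorem top1_push1_or_push1_eq : ∀ {m : ℕ} (x : Ann Γ) (s : Stk Γ (m + 1)),
    top1 (push1 x s) = List.concat (top1 s) x ∨ push1 x s = s
  | 0, _, _ => Or.inl (List.concat_eq_append ..).symm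
  | m + 1, x, s => by
    rcases List.eq_nil_or_concat s with rfl | ⟨L, g, rfl⟩
    · exact Or.inr rfl
    · rw [List.concat_eq_append, push1_append_singleton, top1_append_singleton,
        top1_append_singleton]
      rcases top1_push1_or_push1_eq x g with h | h
      · exact Or.inl h
      · exact Or.inr (by rw [h])

theorem pref1_push1 : ∀ {m : ℕ} (i : ℕ) (x : Ann Γ) (s : Stk Γ (m + 1)),
    i < List.length (top1 s) → pref1 i (push1 x s) = pref1 i s
  | 0, _, _, _, h => List.take_append_of_le_length h
  | m + 1, i, x, s, h => by
    rcases List.eq_nil_or_concat s with rfl | ⟨L, g, rfl⟩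
    · rw [top1_nil] at h
      exact absurd h (Nat.not_lt_zero i)
    · rw [List.concat_eq_append, top1_append_singleton] at h
      rw [List.concat_eq_append, push1_append_singleton, pref1_append_singleton,
        pref1_append_singleton, pref1_push1 i x g h]

section Decomp

variable (ordf : Γ → ℕ) (isLam : Γ → Bool)

theorem mem_of_mem_decompRevD : ∀ {l : ℕ} {L : List (ℕ × Ann Γ)} {p : ℕ × Ann Γ},
    p ∈ decompRevD ordf isLam l L → p ∈ L
  | _, [], _, h => by simp [decompRevD] at h
  | l, q :: rest, p, h => by
    rw [decompRevD] at h
    split at h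
    · rcases List.mem_cons.mp h with rfl | h
      · exact List.mem_cons_self
      · exact List.mem_cons_of_mem _ (mem_of_mem_decompRevD h)
    · exact List.mem_cons_of_mem _ (mem_of_mem_decompRevD h)

theorem decompRevD_cons_of_isLam_false (l : ℕ) (p : ℕ × Ann Γ) (L : List (ℕ × Ann Γ))
    (hp : isLam p.2.1 = false) :
    decompRevD ordf isLam l (p :: L) = decompRevD ordf isLam l L := by
  simp [decompRevD, hp]

theorem DecompD_fst_lt {l : ℕ} {t : Stk Γ 1} {p : ℕ × Ann Γ}
    (hp : p ∈ DecompD ordf isLam l t) : p.1 < List.length t := by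
  obtain ⟨⟨y, i⟩, hq, rfl⟩ := List.mem_map.mp <| List.mem_reverse.mp <|
    mem_of_mem_decompRevD ordf isLam (List.mem_reverse.mp hp)
  exact (List.mem_zipIdx' hq).1

theorem DecompD_concat_of_isLam_false (l : ℕ) (t : List (Ann Γ)) (x : Ann Γ)
    (hx : isLam x.1 = false) :
    DecompD ordf isLam l (t.concat x) = DecompD ordf isLam l t := by
  -- `unfold DecompD` would leave `zipIdx` at type `Stk Γ 0`, where the list lemmas do not rewrite
  show (decompRevD ordf isLam l ((t.concat x).zipIdx.map Prod.swap).reverse).reverse =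
    (decompRevD ordf isLam l (t.zipIdx.map Prod.swap).reverse).reverse
  rw [List.concat_eq_append, List.zipIdx_append, List.map_append, List.reverse_append]
  exact congrArg List.reverse (decompRevD_cons_of_isLam_false ordf isLam l _ _ hx)

theorem DecompD_top1_push1 {m : ℕ} (l : ℕ) (x : Ann Γ) (s : Stk Γ (m + 1))
    (hx : isLam x.1 = false) :
    DecompD ordf isLam l (top1 (push1 x s)) = DecompD ordf isLam l (top1 s) := by
  rcases top1_push1_or_push1_eq x s with h | h <;> rw [h]
  exact DecompD_concat_of_isLam_false ordf isLam l _ x hx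

end Decomp

/-- Pushing a non-lambda symbol preserves `l`-safety: if `s` is an `l`-safe
higher-order stack and `a` is not a lambda symbol, then `push₁ a^(j,k) s` is
`l`-safe for any link `(j, k)`. -/
theorem LSafe.push1_nonLambda (n : ℕ) (ordf : Γ → ℕ) (isLam : Γ → Bool) {m : ℕ}
    (s : Stk Γ (m + 1)) (l : ℕ) (a : Γ) (j k : ℕ)
    (ha : isLam a = false) (hsafe : LSafe n ordf isLam l s) :
    LSafe n ordf isLam l (push1 (a, j, k) s) := by
  obtain ⟨_, _, hheights, hlast, hadj⟩ := hsafe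
  have hD := DecompD_top1_push1 ordf isLam l (a, j, k) s ha
  have hpref : ∀ p ∈ DecompD ordf isLam l (top1 s),
      pref1 p.1 (push1 (a, j, k) s) = pref1 p.1 s :=
    fun p hp => pref1_push1 p.1 _ s (DecompD_fst_lt ordf isLam hp)
  refine ⟨l, _, ?_, ?_, ?_⟩ <;> simp only [hD]
  · exact hheights
  · intro p hp
    rw [hpref p (List.mem_of_mem_getLast? hp)]
    exact hlast p hp
  · intro i p p' hp
    rw [hpref p (List.mem_of_getElem? hp)]
    exact hadj i p p' hp
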